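/- Let G be a connected chordal finite simple graph with at least 2 vertices, let S be the set of cut vertices of G, and let G' = G − S be the graph obtained by deleting the vertices of S. Then a set U of vertices of G is a connected vertex cover of G if and only if S ⊆ U and U ∩ V(G') is a vertex cover of G'. -/

import Mathlib

/-- `U` is a vertex cover of `G`: every edge has at least one endpoint in `U`. -/
def IsVertexCover {V : Type*} (G : SimpleGraph V) (U : Set V) : Prop :=
  ∀ ⦃a b : V⦄, G.Adj a b → a ∈ U ∨ b ∈ U

/-- `U` is a connected vertex cover of `G`. -/
def IsCVC {V : Type*} (G : SimpleGraph V) (U : Set V) : Prop :=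
  IsVertexCover G U ∧ (G.induce U).Connected

/-- `v` is a cut vertex of the connected graph `G`:
deleting `v` from `G` leaves a disconnected graph. -/
def IsCutVertex {V : Type*} (G : SimpleGraph V) (v : V) : Prop :=
  G.Connected ∧ ¬ (G.induce {v}ᶜ).Connected

/-- `G` has an induced cycle of length `n`. -/
def HasInducedCycle {V : Type*} (G : SimpleGraph V) (n : ℕ) : Prop :=
  3 ≤ n ∧ ∃ f : ZMod n → V, Function.Injective f ∧
    ∀ i j : ZMod n, G.Adj (f i) (f j) ↔ (j = i + 1 ∨ i = j + 1)

/-- `G` is chordal: it has no induced cycle of length at least `4`. -/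
def IsChordal {V : Type*} (G : SimpleGraph V) : Prop :=
  ∀ n : ℕ, 4 ≤ n → ¬ HasInducedCycle G n

section Aux

open SimpleGraph

/-- Reachability in an induced subgraph is monotone in the vertex set. -/
lemma aux_reach_mono {V : Type*} (G : SimpleGraph V) {U W : Set V} (h : U ⊆ W) {a b : ↥U}
    (hr : (G.induce U).Reachable a b) :
    (G.induce W).Reachable ⟨a, h a.2⟩ ⟨b, h b.2⟩ := by
  let f : G.induce U →g G.induce W := ⟨Set.inclusion h, fun {x y} hxy => hxy⟩
  exact hr.map f

/-- In a connected graph with another vertex, every vertex has a neighbour. -/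
lemma aux_exists_adj_of_ne {V : Type*} (G : SimpleGraph V) (hconn : G.Connected)
    {w w' : V} (hne : w ≠ w') : ∃ z, G.Adj w z := by
  obtain ⟨p⟩ := hconn.preconnected w w'
  match p with
  | .nil => exact absurd rfl hne
  | .cons h q => exact ⟨_, h⟩

/-- If two vertices of a vertex cover `U` are joined by a walk in `G` but are not
reachable within `G[U]`, then some vertex `x ∉ U` has two neighbours lying in `U`
which are not reachable from each other within `G[U]`. -/
lemma aux_triple {V : Type*} (G : SimpleGraph V) (U : Set V) (hcov : _root_.IsVertexCover G U)
    (k : ℕ) :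
    ∀ (q : ℕ → V) (a b : V), (∀ i < k, G.Adj (q i) (q (i+1))) → q 0 = a → q k = b →
      ∀ (ha : a ∈ U) (hb : b ∈ U), ¬ (G.induce U).Reachable ⟨a, ha⟩ ⟨b, hb⟩ →
      ∃ (x a' b' : V) (ha' : a' ∈ U) (hb' : b' ∈ U), x ∉ U ∧ G.Adj x a' ∧ G.Adj x b' ∧
        ¬ (G.induce U).Reachable ⟨a', ha'⟩ ⟨b', hb'⟩ := by
  induction k using Nat.strong_induction_on with
  | _ k IH =>
  intro q a b hadj hq0 hqk ha hb hnr
  subst hq0; subst hqk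
  rcases Nat.lt_or_ge k 2 with hk | hk
  · interval_cases k
    · exact absurd (Reachable.refl _) hnr
    · exact absurd (SimpleGraph.Adj.reachable
        (show (G.induce U).Adj ⟨q 0, ha⟩ ⟨q 1, hb⟩ from hadj 0 (by omega))) hnr
  · by_cases h1 : q 1 ∈ U
    · have hr01 : (G.induce U).Reachable ⟨q 0, ha⟩ ⟨q 1, h1⟩ :=
        (SimpleGraph.Adj.reachable
          (show (G.induce U).Adj ⟨q 0, ha⟩ ⟨q 1, h1⟩ from hadj 0 (by omega)))
      have hnr1 : ¬ (G.induce U).Reachable ⟨q 1, h1⟩ ⟨q k, hb⟩ := fun h => hnr (hr01.trans h)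
      exact IH (k-1) (by omega) (fun m => q (m+1)) (q 1) (q k)
        (fun i hi => hadj (i+1) (by omega)) rfl
        (by simp only [Nat.sub_add_cancel (by omega : 1 ≤ k)]) h1 hb hnr1
    · have h2 : q 2 ∈ U := (hcov (hadj 1 (by omega))).resolve_left h1
      by_cases hr02 : (G.induce U).Reachable ⟨q 0, ha⟩ ⟨q 2, h2⟩
      · have hnr2 : ¬ (G.induce U).Reachable ⟨q 2, h2⟩ ⟨q k, hb⟩ := fun h => hnr (hr02.trans h)
        exact IH (k-2) (by omega) (fun m => q (m+2)) (q 2) (q k)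
          (fun i hi => by
            have e : i + 2 + 1 = i + 1 + 2 := by omega
            have := hadj (i+2) (by omega); rwa [e] at this) rfl
          (by simp only [Nat.sub_add_cancel (by omega : 2 ≤ k)]) h2 hb hnr2
      · exact ⟨q 1, q 0, q 2, ha, h2, h1, (hadj 0 (by omega)).symm, hadj 1 (by omega), hr02⟩

/-- The key chordality argument: if `x ∉ U` is adjacent to two vertices `a b ∈ U` which are
not reachable from each other in `G[U]`, and there is a walk from `a` to `b` avoiding `x`,
and moreover every vertex outside `U` is non-adjacent to every other vertex outside `U`
(i.e. `U` is a vertex cover), then `G` has an induced cycle of length at least 4. -/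
lemma aux_cycle {V : Type*} {G : SimpleGraph V} {U : Set V}
    (hcov : _root_.IsVertexCover G U) (k : ℕ) :
    ∀ (x a b : V) (q : ℕ → V), x ∉ U →
      ∀ (ha : a ∈ U) (hb : b ∈ U), G.Adj x a → G.Adj x b →
      ¬ (G.induce U).Reachable ⟨a, ha⟩ ⟨b, hb⟩ →
      q 0 = a → q k = b → (∀ i < k, G.Adj (q i) (q (i+1))) →
      (∀ i ≤ k, q i ≠ x) →
      ∃ n, 4 ≤ n ∧ HasInducedCycle G n := by
  induction k using Nat.strong_induction_on with
  | _ k IH =>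
  intro x a b q hx ha hb hxa hxb hnr hq0 hqk hadj hne
  subst hq0; subst hqk
  have hk2 : 2 ≤ k := by
    by_contra h
    interval_cases k
    · exact hnr (Reachable.refl _)
    · exact hnr (SimpleGraph.Adj.reachable
        (show (G.induce U).Adj ⟨q 0, ha⟩ ⟨q 1, hb⟩ from hadj 0 (by omega)))
  by_cases hsp : ∃ i j, i < j ∧ j ≤ k ∧ (q i = q j ∨ (i + 1 < j ∧ G.Adj (q i) (q j)))
  · obtain ⟨i, j, hij, hjk, hcase⟩ := hsp
    rcases hcase with heq | ⟨hij2, hchord⟩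
    · -- duplicate vertex: splice out the loop
      refine IH (k - (j - i)) (by omega) x (q 0) (q k)
        (fun m => if m ≤ i then q m else q (m + (j - i))) hx ha hb hxa hxb hnr
        (by simp) ?_ ?_ ?_
      · beta_reduce
        rcases eq_or_lt_of_le (show i ≤ k - (j - i) by omega) with h | h
        · rw [if_pos (le_of_eq h.symm)]
          rw [← h, heq]; congr 1; omega
        · rw [if_neg (by omega)]; congr 1; omega
      · intro m hm
        beta_reduce
        by_cases h1 : m + 1 ≤ i
        · rw [if_pos (by omega : m ≤ i), if_pos h1]; exact hadj m (by omega)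
        · by_cases h2 : m ≤ i
          · have hmi : m = i := by omega
            rw [if_pos h2, if_neg h1, hmi, heq]
            have e : i + 1 + (j - i) = j + 1 := by omega
            rw [e]; exact hadj j (by omega)
          · rw [if_neg h2, if_neg (by omega : ¬ m + 1 ≤ i)]
            have e : m + 1 + (j - i) = m + (j - i) + 1 := by omega
            rw [e]; exact hadj (m + (j - i)) (by omega)
      · intro m hm
        beta_reduce
        by_cases h2 : m ≤ i
        · rw [if_pos h2]; exact hne m (by omega)
        · rw [if_neg h2]; exact hne (m + (j - i)) (by omega)
    · -- chord: splice
      refine IH (k - (j - i - 1)) (by omega) x (q 0) (q k)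
        (fun m => if m ≤ i then q m else q (m + (j - i - 1))) hx ha hb hxa hxb hnr
        (by simp) ?_ ?_ ?_
      · beta_reduce
        rw [if_neg (by omega : ¬ k - (j - i - 1) ≤ i)]; congr 1; omega
      · intro m hm
        beta_reduce
        by_cases h1 : m + 1 ≤ i
        · rw [if_pos (by omega : m ≤ i), if_pos h1]; exact hadj m (by omega)
        · by_cases h2 : m ≤ i
          · have hmi : m = i := by omega
            rw [if_pos h2, if_neg h1, hmi]
            have e : i + 1 + (j - i - 1) = j := by omega
            rw [e]; exact hchord
          · rw [if_neg h2, if_neg (by omega : ¬ m + 1 ≤ i)]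
            have e : m + 1 + (j - i - 1) = m + (j - i - 1) + 1 := by omega
            rw [e]; exact hadj (m + (j - i - 1)) (by omega)
      · intro m hm
        beta_reduce
        by_cases h2 : m ≤ i
        · rw [if_pos h2]; exact hne m (by omega)
        · rw [if_neg h2]; exact hne (m + (j - i - 1)) (by omega)
  · by_cases hxq : ∃ i, 0 < i ∧ i < k ∧ G.Adj x (q i)
    · obtain ⟨i, hi0, hik, hxi⟩ := hxq
      have hqiU : q i ∈ U := (hcov hxi).resolve_left hx
      by_cases hr : (G.induce U).Reachable ⟨q 0, ha⟩ ⟨q i, hqiU⟩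
      · have hnr2 : ¬ (G.induce U).Reachable ⟨q i, hqiU⟩ ⟨q k, hb⟩ := fun h => hnr (hr.trans h)
        refine IH (k - i) (by omega) x (q i) (q k) (fun m => q (m + i)) hx hqiU hb hxi hxb hnr2
          (by simp) (by beta_reduce; rw [Nat.sub_add_cancel (by omega : i ≤ k)]) ?_ ?_
        · intro m hm
          beta_reduce
          have e : m + 1 + i = m + i + 1 := by omega
          rw [e]; exact hadj (m + i) (by omega)
        · intro m hm; beta_reduce; exact hne (m + i) (by omega)
      · exact IH i (by omega) x (q 0) (q i) q hx ha hqiU hxa hxi hr rfl rfl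
          (fun m hm => hadj m (by omega)) (fun m hm => hne m (by omega))
    · -- base case: build the induced cycle
      push_neg at hsp hxq
      have hinj : ∀ i j, i ≤ k → j ≤ k → q i = q j → i = j := by
        intro i j hik hjk hqij
        by_contra hne'
        rcases Nat.lt_or_ge i j with h | h
        · exact (hsp i j h hjk).1 hqij
        · exact (hsp j i (by omega) hik).1 hqij.symm
      have hnochord : ∀ i j, j ≤ k → i + 1 < j → ¬ G.Adj (q i) (q j) := by
        intro i j hjk hij h
        exact ((hsp i j (by omega) hjk).2 hij) h
      haveI : NeZero (k + 2) := ⟨by omega⟩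
      haveI : Fact (1 < k + 2) := ⟨by omega⟩
      have valinj : ∀ c d : ZMod (k+2), c.val = d.val → c = d := fun c d h =>
        ZMod.val_injective (k+2) h
      have key : ∀ c d : ZMod (k+2), d = c + 1 ↔ d.val = (c.val + 1) % (k+2) := by
        intro c d
        constructor
        · rintro rfl; rw [ZMod.val_add, ZMod.val_one]
        · intro h; apply valinj; rw [ZMod.val_add, ZMod.val_one]; exact h
      have hmod : ∀ m : ℕ, m < k + 2 → (m + 1) % (k+2) = if m = k+1 then 0 else m+1 := by
        intro m hm
        split
        · rename_i h; subst h
          have e : k + 1 + 1 = k + 2 := by omega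
          rw [e, Nat.mod_self]
        · exact Nat.mod_eq_of_lt (by omega)
      refine ⟨k + 2, by omega, by omega, fun i => if i.val = 0 then x else q (i.val - 1), ?_, ?_⟩
      · -- injectivity
        intro i j hfij
        beta_reduce at hfij
        have hiv := ZMod.val_lt i
        have hjv := ZMod.val_lt j
        by_cases hi : i.val = 0 <;> by_cases hj : j.val = 0
        · exact valinj _ _ (by omega)
        · rw [if_pos hi, if_neg hj] at hfij
          exact absurd hfij.symm (hne (j.val - 1) (by omega))
        · rw [if_neg hi, if_pos hj] at hfij
          exact absurd hfij (hne (i.val - 1) (by omega))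
        · rw [if_neg hi, if_neg hj] at hfij
          have := hinj _ _ (by omega) (by omega) hfij
          exact valinj _ _ (by omega)
      · -- adjacency characterization
        intro i j
        rw [key i j, key j i]
        have hiv := ZMod.val_lt i
        have hjv := ZMod.val_lt j
        rw [hmod i.val (by omega), hmod j.val (by omega)]
        beta_reduce
        by_cases hi : i.val = 0 <;> by_cases hj : j.val = 0
        · rw [if_pos hi, if_pos hj, if_neg (show ¬ i.val = k + 1 by omega),
            if_neg (show ¬ j.val = k + 1 by omega)]
          constructor
          · intro h; exact absurd h (G.irrefl)
          · intro h; exact absurd h (by omega)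
        · rw [if_pos hi, if_neg hj, if_neg (show ¬ i.val = k + 1 by omega)]
          by_cases hjk1 : j.val = k + 1
          · rw [if_pos hjk1]
            rw [show j.val - 1 = k by omega]
            constructor
            · intro _; right; exact hi
            · intro _; exact hxb
          · rw [if_neg hjk1]
            by_cases hj1 : j.val = 1
            · rw [show j.val - 1 = 0 by omega]
              constructor
              · intro _; left; omega
              · intro _; exact hxa
            · constructor
              · intro h; exact absurd h (hxq (j.val - 1) (by omega) (by omega))
              · intro h; exact absurd h (by omega)
        · rw [if_neg hi, if_pos hj, if_neg (show ¬ j.val = k + 1 by omega)]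
          by_cases hik1 : i.val = k + 1
          · rw [if_pos hik1]
            rw [show i.val - 1 = k by omega]
            constructor
            · intro _; left; exact hj
            · intro _; exact hxb.symm
          · rw [if_neg hik1]
            by_cases hi1 : i.val = 1
            · rw [show i.val - 1 = 0 by omega]
              constructor
              · intro _; right; omega
              · intro _; exact hxa.symm
            · constructor
              · intro h; exact absurd h.symm (hxq (i.val - 1) (by omega) (by omega))
              · intro h; exact absurd h (by omega)
        · rw [if_neg hi, if_neg hj]
          by_cases hik1 : i.val = k + 1 <;> by_cases hjk1 : j.val = k + 1
          · rw [if_pos hik1, if_pos hjk1]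
            rw [show i.val - 1 = j.val - 1 by omega]
            constructor
            · intro h; exact absurd h (G.irrefl)
            · intro h; exact absurd h (by omega)
          · rw [if_pos hik1, if_neg hjk1]
            rw [show i.val - 1 = k by omega]
            constructor
            · intro h
              rcases Nat.lt_or_ge j.val k with hlt | hge
              · exact absurd h.symm (hnochord (j.val - 1) k le_rfl (by omega))
              · right; omega
            · rintro (h | h)
              · exact absurd h hj
              · rw [show j.val - 1 = k - 1 by omega]
                have h' := (hadj (k-1) (by omega)).symm
                rw [Nat.sub_add_cancel (by omega : 1 ≤ k)] at h'
                exact h'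
          · rw [if_neg hik1, if_pos hjk1]
            rw [show j.val - 1 = k by omega]
            constructor
            · intro h
              rcases Nat.lt_or_ge i.val k with hlt | hge
              · exact absurd h (hnochord (i.val - 1) k le_rfl (by omega))
              · left; omega
            · rintro (h | h)
              · rw [show i.val - 1 = k - 1 by omega]
                have h' := hadj (k-1) (by omega)
                rw [Nat.sub_add_cancel (by omega : 1 ≤ k)] at h'
                exact h'
              · exact absurd h hi
          · rw [if_neg hik1, if_neg hjk1]
            constructor
            · intro h
              rcases Nat.lt_trichotomy i.val j.val with hlt | heq | hgt
              · by_cases hsucc : j.val = i.val + 1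
                · left; exact hsucc
                · exact absurd h (hnochord (i.val - 1) (j.val - 1) (by omega) (by omega))
              · rw [show i.val - 1 = j.val - 1 by omega] at h
                exact absurd h (G.irrefl)
              · by_cases hsucc : i.val = j.val + 1
                · right; exact hsucc
                · exact absurd h.symm (hnochord (j.val - 1) (i.val - 1) (by omega) (by omega))
            · rintro (h | h)
              · rw [show j.val - 1 = (i.val - 1) + 1 by omega]
                exact hadj (i.val - 1) (by omega)
              · rw [show i.val - 1 = (j.val - 1) + 1 by omega]
                exact (hadj (j.val - 1) (by omega)).symm

end Aux

open SimpleGraph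

theorem stmt6 {V : Type*} [Fintype V] (G : SimpleGraph V)
    (hconn : G.Connected) (hchordal : IsChordal G) (hcard : 2 ≤ Fintype.card V)
    (S : Set V) (hS : S = {v : V | IsCutVertex G v}) (U : Set V) :
    IsCVC G U ↔
      S ⊆ U ∧ _root_.IsVertexCover (G.induce Sᶜ) {x : ↥Sᶜ | (x : V) ∈ U} := by
  constructor
  · rintro ⟨hcov, hUconn⟩
    constructor
    · intro v hv
      by_contra hvU
      rw [hS] at hv
      obtain ⟨-, hdisc⟩ := hv
      apply hdisc
      have hUsub : U ⊆ ({v}ᶜ : Set V) := fun u hu => by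
        simp only [Set.mem_compl_iff, Set.mem_singleton_iff]
        rintro rfl; exact hvU hu
      haveI hUne : Nonempty ↥U := hUconn.nonempty
      obtain ⟨u0, hu0⟩ := hUne
      have reachU : ∀ (w : V) (hw : w ∈ ({v}ᶜ : Set V)), ∃ (u : V) (hu : u ∈ U),
          (G.induce ({v}ᶜ : Set V)).Reachable ⟨w, hw⟩ ⟨u, hUsub hu⟩ := by
        intro w hw
        by_cases hwU : w ∈ U
        · exact ⟨w, hwU, Reachable.refl _⟩
        · have hwv : w ≠ v := by simpa using hw
          obtain ⟨z, hz⟩ := aux_exists_adj_of_ne G hconn (show w ≠ v from hwv)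
          have hzU : z ∈ U := (hcov hz).resolve_left hwU
          exact ⟨z, hzU, SimpleGraph.Adj.reachable
            (show (G.induce ({v}ᶜ : Set V)).Adj ⟨w, hw⟩ ⟨z, hUsub hzU⟩ from hz)⟩
      haveI : Nonempty ↥({v}ᶜ : Set V) := ⟨⟨u0, hUsub hu0⟩⟩
      refine ⟨?_⟩
      intro p q
      obtain ⟨up, hup, hp⟩ := reachU ↑p p.2
      obtain ⟨uq, huq, hq⟩ := reachU ↑q q.2
      have hr : (G.induce U).Reachable ⟨up, hup⟩ ⟨uq, huq⟩ := hUconn.preconnected _ _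
      exact (hp.trans ((aux_reach_mono G hUsub hr).trans hq.symm))
    · intro a b hab
      exact hcov hab
  · rintro ⟨hSU, hcov'⟩
    have hcov : _root_.IsVertexCover G U := by
      intro a b hab
      by_cases haS : a ∈ S
      · exact Or.inl (hSU haS)
      · by_cases hbS : b ∈ S
        · exact Or.inr (hSU hbS)
        · exact hcov' (show (G.induce Sᶜ).Adj ⟨a, haS⟩ ⟨b, hbS⟩ from hab)
    have hedge : ∃ u, u ∈ U := by
      obtain ⟨w, w', hww'⟩ := Fintype.exists_pair_of_one_lt_card (by omega : 1 < Fintype.card V)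
      obtain ⟨z, hz⟩ := aux_exists_adj_of_ne G hconn hww'
      rcases hcov hz with h | h
      exacts [⟨w, h⟩, ⟨z, h⟩]
    obtain ⟨u0, hu0⟩ := hedge
    haveI : Nonempty ↥U := ⟨⟨u0, hu0⟩⟩
    refine ⟨hcov, ⟨?_⟩⟩
    intro u w
    by_contra hnr
    obtain ⟨p⟩ := hconn.preconnected ↑u ↑w
    obtain ⟨x, a, b, ha, hb, hx, hxa, hxb, hnab⟩ := aux_triple G U hcov p.length
      p.getVert ↑u ↑w (fun i hi => p.adj_getVert_succ hi) p.getVert_zero p.getVert_length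
      u.2 w.2 hnr
    have hxS : x ∉ S := fun h => hx (hSU h)
    rw [hS] at hxS
    have hGx : (G.induce ({x}ᶜ : Set V)).Connected := by
      by_contra h; exact hxS ⟨hconn, h⟩
    have hax : a ∈ ({x}ᶜ : Set V) := by
      simp only [Set.mem_compl_iff, Set.mem_singleton_iff]
      rintro rfl; exact hx ha
    have hbx : b ∈ ({x}ᶜ : Set V) := by
      simp only [Set.mem_compl_iff, Set.mem_singleton_iff]
      rintro rfl; exact hx hb
    obtain ⟨p2⟩ := hGx.preconnected ⟨a, hax⟩ ⟨b, hbx⟩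
    obtain ⟨n, hn4, hcyc⟩ := aux_cycle hcov p2.length x a b
      (fun m => ↑(p2.getVert m)) hx ha hb hxa hxb hnab
      (by beta_reduce; rw [p2.getVert_zero]) (by beta_reduce; rw [p2.getVert_length])
      (fun i hi => p2.adj_getVert_succ hi)
      (fun i hi => by
        beta_reduce
        have h2 := (p2.getVert i).2
        simp only [Set.mem_compl_iff, Set.mem_singleton_iff] at h2
        exact h2)
    exact hchordal n hn4 hcyc
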